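/- arXiv:2209.00515 — 3 statements merged into one kernel-verified Lean document; each statement's English description precedes it below -/
import Mathlib

section
/- If X and Y are independent random variables with laws F, G having finite first moments and positive means m_X, m_Y, then T(X+Y) ≤ (m_X/(m_X+m_Y)) T(X) + (m_Y/(m_X+m_Y)) T(Y). -/
open MeasureTheory Complex

/-- Fourier transform `f̂(ξ) = ∫ e^{-iξx} dF(x)` of a measure on `ℝ`. -/
noncomputable def ft (μ : Measure ℝ) (ξ : ℝ) : ℂ :=
  ∫ x, Complex.exp (-(Complex.I * ξ * x)) ∂μ

/-- Derivative of the Fourier transform: `f̂'(ξ) = -i ∫ x e^{-iξx} dF(x)`. -/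
noncomputable def ft' (μ : Measure ℝ) (ξ : ℝ) : ℂ :=
  ∫ x, -(Complex.I * x) * Complex.exp (-(Complex.I * ξ * x)) ∂μ

/-- The Fourier-based inequality index `T(F) = (1/2) sup_ξ |f̂(ξ) - f̂'(ξ)/f̂'(0)|`. -/
noncomputable def Tindex (μ : Measure ℝ) : ℝ :=
  (1 / 2) * ⨆ ξ : ℝ, ‖ft μ ξ - ft' μ ξ / ft' μ 0‖

/-!
The law of `X + Y` is `F ∗ G`, whose transform is `f̂ ĝ`. Since the first moments are finite, `f̂'`
is the derivative of `f̂`, so the Leibniz rule gives `(f̂ ĝ)' = f̂' ĝ + f̂ ĝ'`, and `f̂'(0) = -i m`.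
With `m = m_X + m_Y` this yields the identity
`f̂ ĝ - (f̂ ĝ)' / (f̂'(0) + ĝ'(0)) = (m_X / m) ĝ (f̂ - f̂' / f̂'(0)) + (m_Y / m) f̂ (ĝ - ĝ' / ĝ'(0))`,
and `|f̂|, |ĝ| ≤ 1` turns it into the inequality between the suprema.
-/

section

variable {μ ν : Measure ℝ}

lemma ft_eq_charFun (ξ : ℝ) : ft μ ξ = charFun μ (-ξ) := by
  simp only [ft, charFun_apply_real]
  congr with x
  push_cast
  ring_nf

lemma ft_zero [IsProbabilityMeasure μ] : ft μ 0 = 1 := by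
  simp [ft_eq_charFun]

lemma norm_ft_le_one [IsProbabilityMeasure μ] (ξ : ℝ) : ‖ft μ ξ‖ ≤ 1 :=
  (ft_eq_charFun ξ).symm ▸ norm_charFun_le_one _

lemma hasDerivAt_ft [IsFiniteMeasure μ] (hμ : Integrable id μ) (ξ : ℝ) :
    HasDerivAt (ft μ) (ft' μ ξ) ξ := by
  have hmem : MemLp id (1 : ℕ) μ := by simpa using memLp_one_iff_integrable.2 hμ
  have hdiff : DifferentiableAt ℝ (charFun μ) (-ξ) :=
    (contDiff_charFun hmem).differentiable one_ne_zero _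
  have hderiv := iteratedDeriv_charFun (t := -ξ) hmem
  rw [iteratedDeriv_one] at hderiv
  have hcomp := HasDerivAt.scomp ξ hdiff.hasDerivAt (hasDerivAt_neg ξ)
  rw [show ft μ = charFun μ ∘ Neg.neg from funext ft_eq_charFun]
  refine hcomp.congr_deriv ?_
  rw [hderiv, ft', neg_one_smul, ← integral_const_mul, ← integral_neg]
  congr with x
  push_cast
  ring_nf

lemma ft_conv [IsFiniteMeasure μ] [IsFiniteMeasure ν] (ξ : ℝ) :
    ft (μ ∗ ν) ξ = ft μ ξ * ft ν ξ := by
  simp only [ft_eq_charFun, charFun_conv]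

lemma integrable_id_conv [IsFiniteMeasure μ] [IsFiniteMeasure ν] (hμ : Integrable id μ)
    (hν : Integrable id ν) : Integrable id (μ ∗ ν) := by
  rw [Measure.conv, integrable_map_measure (by fun_prop) (by fun_prop)]
  exact (hμ.comp_fst ν).add (hν.comp_snd μ)

lemma ft'_conv [IsFiniteMeasure μ] [IsFiniteMeasure ν] (hμ : Integrable id μ)
    (hν : Integrable id ν) (ξ : ℝ) :
    ft' (μ ∗ ν) ξ = ft' μ ξ * ft ν ξ + ft μ ξ * ft' ν ξ := by
  refine (hasDerivAt_ft (integrable_id_conv hμ hν) ξ).unique ?_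
  rw [show ft (μ ∗ ν) = ft μ * ft ν from funext ft_conv]
  exact (hasDerivAt_ft hμ ξ).mul (hasDerivAt_ft hν ξ)

lemma ft'_zero : ft' μ 0 = -(I * ∫ x, x ∂μ) := by
  have hcast : ∫ x : ℝ, (x : ℂ) ∂μ = ↑(∫ x, x ∂μ) := integral_ofReal
  simp [ft', integral_neg, integral_const_mul, hcast]

lemma norm_ft'_le (ξ : ℝ) : ‖ft' μ ξ‖ ≤ ∫ x, |x| ∂μ :=
  (norm_integral_le_integral_norm _).trans_eq (by simp [Complex.norm_exp])

noncomputable def ftDeviation (μ : Measure ℝ) (ξ : ℝ) : ℂ := ft μ ξ - ft' μ ξ / ft' μ 0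

lemma Tindex_eq (μ : Measure ℝ) : Tindex μ = 1 / 2 * ⨆ ξ, ‖ftDeviation μ ξ‖ := rfl

lemma bddAbove_norm_ftDeviation [IsProbabilityMeasure μ] :
    BddAbove (Set.range fun ξ ↦ ‖ftDeviation μ ξ‖) := by
  refine ⟨1 + (∫ x, |x| ∂μ) / ‖ft' μ 0‖, ?_⟩
  rintro _ ⟨ξ, rfl⟩
  calc ‖ftDeviation μ ξ‖ ≤ ‖ft μ ξ‖ + ‖ft' μ ξ‖ / ‖ft' μ 0‖ := by
        rw [ftDeviation, ← norm_div]; exact norm_sub_le _ _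
    _ ≤ 1 + (∫ x, |x| ∂μ) / ‖ft' μ 0‖ := by
        gcongr
        · exact norm_ft_le_one ξ
        · exact norm_ft'_le ξ

lemma mul_sub_leibniz_div_eq {f g f' g' a b : ℂ} (ha : a ≠ 0) (hb : b ≠ 0) (hab : a + b ≠ 0) :
    f * g - (f' * g + f * g') / (a + b)
      = a / (a + b) * (g * (f - f' / a)) + b / (a + b) * (f * (g - g' / b)) := by
  field_simp
  ring

lemma ftDeviation_conv [IsProbabilityMeasure μ] [IsProbabilityMeasure ν] (hμ : Integrable id μ)
    (hν : Integrable id ν) (hmμ : ∫ x, x ∂μ ≠ 0) (hmν : ∫ x, x ∂ν ≠ 0)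
    (hm : (∫ x, x ∂μ) + ∫ x, x ∂ν ≠ 0) (ξ : ℝ) :
    ftDeviation (μ ∗ ν) ξ
      = ((∫ x, x ∂μ) / ((∫ x, x ∂μ) + ∫ x, x ∂ν) : ℝ) * (ft ν ξ * ftDeviation μ ξ)
        + ((∫ x, x ∂ν) / ((∫ x, x ∂μ) + ∫ x, x ∂ν) : ℝ) * (ft μ ξ * ftDeviation ν ξ) := by
  have h0 : ft' (μ ∗ ν) 0 = ft' μ 0 + ft' ν 0 := by
    rw [ft'_conv hμ hν, ft_zero, ft_zero, mul_one, one_mul]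
  have hcoef : ∀ p : ℝ, -(I * p) / (-(I * ∫ x, x ∂μ) + -(I * ∫ x, x ∂ν))
      = ((p / ((∫ x, x ∂μ) + ∫ x, x ∂ν) : ℝ) : ℂ) := by
    intro p
    rw [← neg_add, ← mul_add, neg_div_neg_eq, mul_div_mul_left _ _ I_ne_zero]
    push_cast
    rfl
  have hne : ∀ {p : ℝ}, p ≠ 0 → -(I * p) ≠ 0 := fun hp ↦ by simpa using hp
  rw [ftDeviation, ft_conv, ft'_conv hμ hν, h0]
  simp only [ftDeviation, ft'_zero]
  rw [mul_sub_leibniz_div_eq (hne hmμ) (hne hmν)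
    (by rw [← neg_add, ← mul_add, ← ofReal_add]; exact hne hm), hcoef, hcoef]

lemma norm_ftDeviation_conv_le [IsProbabilityMeasure μ] [IsProbabilityMeasure ν]
    (hμ : Integrable id μ) (hν : Integrable id ν) (hmμ : 0 < ∫ x, x ∂μ) (hmν : 0 < ∫ x, x ∂ν)
    (ξ : ℝ) :
    ‖ftDeviation (μ ∗ ν) ξ‖
      ≤ (∫ x, x ∂μ) / ((∫ x, x ∂μ) + ∫ x, x ∂ν) * ‖ftDeviation μ ξ‖
        + (∫ x, x ∂ν) / ((∫ x, x ∂μ) + ∫ x, x ∂ν) * ‖ftDeviation ν ξ‖ := by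
  rw [ftDeviation_conv hμ hν hmμ.ne' hmν.ne' (by positivity)]
  refine (norm_add_le _ _).trans ?_
  rw [norm_mul, norm_mul, norm_mul, norm_mul, Complex.norm_of_nonneg (by positivity),
    Complex.norm_of_nonneg (by positivity)]
  gcongr
  · exact mul_le_of_le_one_left (norm_nonneg _) (norm_ft_le_one ξ)
  · exact mul_le_of_le_one_left (norm_nonneg _) (norm_ft_le_one ξ)

theorem Tindex_conv_le [IsProbabilityMeasure μ] [IsProbabilityMeasure ν]
    (hμ : Integrable id μ) (hν : Integrable id ν) (hmμ : 0 < ∫ x, x ∂μ) (hmν : 0 < ∫ x, x ∂ν) :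
    Tindex (μ ∗ ν)
      ≤ (∫ x, x ∂μ) / ((∫ x, x ∂μ) + ∫ x, x ∂ν) * Tindex μ
        + (∫ x, x ∂ν) / ((∫ x, x ∂μ) + ∫ x, x ∂ν) * Tindex ν := by
  have hsup : (⨆ ξ, ‖ftDeviation (μ ∗ ν) ξ‖)
      ≤ (∫ x, x ∂μ) / ((∫ x, x ∂μ) + ∫ x, x ∂ν) * (⨆ ξ, ‖ftDeviation μ ξ‖)
        + (∫ x, x ∂ν) / ((∫ x, x ∂μ) + ∫ x, x ∂ν) * ⨆ ξ, ‖ftDeviation ν ξ‖ := by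
    refine ciSup_le fun ξ ↦ (norm_ftDeviation_conv_le hμ hν hmμ hmν ξ).trans ?_
    gcongr
    · exact le_ciSup bddAbove_norm_ftDeviation ξ
    · exact le_ciSup bddAbove_norm_ftDeviation ξ
  rw [Tindex_eq, Tindex_eq, Tindex_eq]
  linarith

end

theorem stmt_4 {Ω : Type*} [MeasurableSpace Ω] (P : Measure Ω) [IsProbabilityMeasure P]
    (X Y : Ω → ℝ) (hX : Measurable X) (hY : Measurable Y)
    (hindep : ProbabilityTheory.IndepFun X Y P)
    (hXint : Integrable X P) (hYint : Integrable Y P)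
    (mX mY : ℝ) (hmX : mX = ∫ ω, X ω ∂P) (hmY : mY = ∫ ω, Y ω ∂P)
    (hmXpos : 0 < mX) (hmYpos : 0 < mY) :
    Tindex (Measure.map (fun ω => X ω + Y ω) P)
      ≤ mX / (mX + mY) * Tindex (Measure.map X P)
        + mY / (mX + mY) * Tindex (Measure.map Y P) := by
  have hmean : ∀ {Z : Ω → ℝ}, Measurable Z → ∫ x, x ∂(P.map Z) = ∫ ω, Z ω ∂P :=
    fun hZ ↦ integral_map hZ.aemeasurable aestronglyMeasurable_id
  have hint : ∀ {Z : Ω → ℝ}, Measurable Z → Integrable Z P → Integrable id (P.map Z) :=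
    fun hZ hZi ↦ (integrable_map_measure aestronglyMeasurable_id hZ.aemeasurable).2 hZi
  have := Measure.isProbabilityMeasure_map (μ := P) hX.aemeasurable
  have := Measure.isProbabilityMeasure_map (μ := P) hY.aemeasurable
  rw [show (fun ω ↦ X ω + Y ω) = X + Y from rfl, hindep.map_add_eq_map_conv_map hX hY]
  subst hmX hmY
  simpa only [hmean hX, hmean hY] using
    Tindex_conv_le (hint hX hXint) (hint hY hYint) (by rwa [hmean hX]) (by rwa [hmean hY])
end

section
/- For a symmetric α-stable law F_α with 1 < α ≤ 2, scale σ > 0 and shift m > 0, having Fourier transform f̂_α(ξ) = exp(-imξ - |σξ|^α), one has T(F_α) = (σα/(2m)) ((α-1)/α)^{(α-1)/α} e^{-(α-1)/α}. -/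
open MeasureTheory Complex

/-! The characteristic function `f̂(ξ) = exp(-imξ - |σξ|^α)` is differentiable for `α > 1`, and
differentiating under the integral sign (using the first moment) identifies `ft'` with its
derivative `f̂(ξ) (-im - ασ|σξ|^{α-2}σξ)`; in particular `f̂'(0) = -im`. Hence
`|f̂ - f̂'/f̂'(0)| = (ασ/m) t^{α-1} e^{-t^α}` with `t = σ|ξ|`. Writing `u = t^α` and
`β = (α-1)/α` this is `(ασ/m) u^β e^{-u}`, and `u^β e^{-u} ≤ β^β e^{-β}` is
`u / β ≤ e^{u/β - 1}` raised to the power `β`, with equality at `u = β`. -/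

lemma rpow_mul_exp_neg_le {β u : ℝ} (hβ : 0 < β) (hu : 0 ≤ u) :
    u ^ β * Real.exp (-u) ≤ β ^ β * Real.exp (-β) := by
  have hle : (u / β) ^ β ≤ Real.exp (u - β) := by
    calc (u / β) ^ β ≤ Real.exp (u / β - 1) ^ β := by
          gcongr
          linarith [Real.add_one_le_exp (u / β - 1)]
      _ = Real.exp (u - β) := by
          rw [← Real.exp_mul, sub_mul, div_mul_cancel₀ _ hβ.ne', one_mul]
  rw [Real.div_rpow hu hβ.le, div_le_iff₀ (by positivity)] at hle
  calc u ^ β * Real.exp (-u) ≤ Real.exp (u - β) * β ^ β * Real.exp (-u) := by gcongr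
    _ = β ^ β * Real.exp (u - β + -u) := by rw [Real.exp_add]; ring
    _ = β ^ β * Real.exp (-β) := by ring_nf

lemma isGreatest_range_abs_rpow_sub_one_mul_exp_neg {α σ : ℝ} (hα : 1 < α) (hσ : σ ≠ 0) :
    IsGreatest (Set.range fun ξ : ℝ => |σ * ξ| ^ (α - 1) * Real.exp (-|σ * ξ| ^ α))
      (((α - 1) / α) ^ ((α - 1) / α) * Real.exp (-((α - 1) / α))) := by
  set β := (α - 1) / α
  have hα₀ : 0 < α := by linarith
  have hβ : 0 < β := div_pos (by linarith) hα₀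
  have hpow : ∀ t : ℝ, 0 ≤ t → t ^ (α - 1) = (t ^ α) ^ β := fun t ht => by
    rw [← Real.rpow_mul ht, mul_div_cancel₀ _ hα₀.ne']
  refine ⟨⟨β ^ α⁻¹ / σ, ?_⟩, ?_⟩
  · have hβα : |σ * (β ^ α⁻¹ / σ)| ^ α = β := by
      rw [mul_div_cancel₀ _ hσ, abs_of_pos (by positivity), ← Real.rpow_mul hβ.le,
        inv_mul_cancel₀ hα₀.ne', Real.rpow_one]
    simp only [hpow _ (abs_nonneg _), hβα]
  · rintro _ ⟨ξ, rfl⟩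
    simp only [hpow _ (abs_nonneg _)]
    exact rpow_mul_exp_neg_le hβ (by positivity)

lemma norm_cexp_neg_I_mul_mul (ξ x : ℝ) : ‖Complex.exp (-(Complex.I * ξ * x))‖ = 1 := by
  rw [Complex.norm_exp]
  simp

lemma hasDerivAt_ft_s12 (μ : Measure ℝ) [IsFiniteMeasure μ] (hint : Integrable (fun x : ℝ => x) μ)
    (ξ₀ : ℝ) : HasDerivAt (ft μ) (ft' μ ξ₀) ξ₀ := by
  have hderiv (x ξ : ℝ) : HasDerivAt (fun ξ : ℝ => Complex.exp (-(Complex.I * ξ * x)))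
      (-(Complex.I * x) * Complex.exp (-(Complex.I * ξ * x))) ξ := by
    have := (((hasDerivAt_id (ξ : ℂ)).comp_ofReal.const_mul Complex.I).mul_const (x : ℂ)).neg.cexp
    simpa [mul_comm] using this
  refine (hasDerivAt_integral_of_dominated_loc_of_deriv_le (bound := fun x => |x|)
    (Filter.univ_mem) (.of_forall fun ξ => by fun_prop) ?_ (by fun_prop) ?_ hint.abs
    (.of_forall fun x ξ _ => hderiv x ξ)).2
  · exact (integrable_const (1 : ℝ)).mono' (by fun_prop)
      (.of_forall fun x => (norm_cexp_neg_I_mul_mul ξ₀ x).le)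
  · exact .of_forall fun x ξ _ => by simp [norm_cexp_neg_I_mul_mul]

noncomputable def stableCF (α σ m ξ : ℝ) : ℂ :=
  Complex.exp (-(Complex.I * m * ξ) - ((|σ * ξ| ^ α : ℝ) : ℂ))

lemma hasDerivAt_stableCF {α : ℝ} (σ m : ℝ) (hα : 1 < α) (ξ : ℝ) :
    HasDerivAt (stableCF α σ m)
      (stableCF α σ m ξ * (-(Complex.I * m) - ((α * |σ * ξ| ^ (α - 2) * (σ * ξ) * σ : ℝ) : ℂ)))
      ξ := by
  have hlin : HasDerivAt (fun ξ : ℝ => -(Complex.I * m * ξ)) (-(Complex.I * m)) ξ := by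
    simpa using ((hasDerivAt_id (ξ : ℂ)).comp_ofReal.const_mul (Complex.I * m)).fun_neg
  have habs : HasDerivAt (fun ξ : ℝ => |σ * ξ| ^ α) (α * |σ * ξ| ^ (α - 2) * (σ * ξ) * σ) ξ :=
    (hasDerivAt_abs_rpow (σ * ξ) hα).comp ξ
      ((hasDerivAt_id ξ).const_mul σ |>.congr_deriv (mul_one σ))
  exact (hlin.sub habs.ofReal_comp).cexp

lemma norm_stableCF (α σ m ξ : ℝ) : ‖stableCF α σ m ξ‖ = Real.exp (-|σ * ξ| ^ α) := by
  rw [stableCF, Complex.norm_exp]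
  simp

lemma abs_abs_rpow_sub_two_mul_self {p : ℝ} (hp : 1 < p) (x : ℝ) :
    |(|x| ^ (p - 2) * x)| = |x| ^ (p - 1) := by
  rcases eq_or_ne x 0 with rfl | hx
  · simp [Real.zero_rpow (sub_ne_zero.mpr hp.ne')]
  · rw [abs_mul, abs_of_nonneg (by positivity), ← Real.rpow_add_one (abs_ne_zero.mpr hx)]
    ring_nf

lemma norm_stableCF_sub_deriv_div_deriv_zero {α σ m : ℝ} (hα : 1 < α) (hm : m ≠ 0) (ξ : ℝ) :
    ‖stableCF α σ m ξ - deriv (stableCF α σ m) ξ / deriv (stableCF α σ m) 0‖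
      = α * |σ| / |m| * (|σ * ξ| ^ (α - 1) * Real.exp (-|σ * ξ| ^ α)) := by
  have hm' : (m : ℂ) ≠ 0 := Complex.ofReal_ne_zero.mpr hm
  have hderiv₀ : deriv (stableCF α σ m) 0 = -(Complex.I * m) := by
    simp [(hasDerivAt_stableCF σ m hα 0).deriv, stableCF, Real.zero_rpow (by linarith : α ≠ 0)]
  have hsub : stableCF α σ m ξ - deriv (stableCF α σ m) ξ / deriv (stableCF α σ m) 0
      = -(stableCF α σ m ξ * ((α * |σ * ξ| ^ (α - 2) * (σ * ξ) * σ : ℝ) : ℂ)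
          / (Complex.I * m)) := by
    rw [hderiv₀, (hasDerivAt_stableCF σ m hα ξ).deriv]
    generalize stableCF α σ m ξ = f
    field_simp
    ring
  have hc : |α * |σ * ξ| ^ (α - 2) * (σ * ξ) * σ| = α * |σ| * |σ * ξ| ^ (α - 1) := by
    rw [← abs_abs_rpow_sub_two_mul_self hα (σ * ξ)]
    simp only [abs_mul, abs_of_pos (by linarith : (0 : ℝ) < α)]
    ring
  rw [hsub, norm_neg, norm_div, norm_mul, norm_mul, Complex.norm_real, Complex.norm_I,
    Complex.norm_real, Real.norm_eq_abs, Real.norm_eq_abs, hc, norm_stableCF]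
  ring

theorem stmt_12_general (α σ m : ℝ) (hα : 1 < α) (hσ : 0 < σ) (hm : 0 < m)
    (μ : Measure ℝ) [IsProbabilityMeasure μ] (hint : Integrable (fun x : ℝ => x) μ)
    (hft : ∀ ξ : ℝ, ft μ ξ = Complex.exp (-(Complex.I * m * ξ) - ((|σ * ξ| ^ α : ℝ) : ℂ))) :
    Tindex μ = σ * α / (2 * m) * ((α - 1) / α) ^ ((α - 1) / α)
      * Real.exp (-((α - 1) / α)) := by
  have hft_eq : ft μ = stableCF α σ m := funext hft
  have hft' : ft' μ = deriv (stableCF α σ m) :=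
    funext fun ξ => by rw [← hft_eq, (hasDerivAt_ft_s12 μ hint ξ).deriv]
  have hnorm (ξ : ℝ) : ‖ft μ ξ - ft' μ ξ / ft' μ 0‖
      = α * σ / m * (|σ * ξ| ^ (α - 1) * Real.exp (-|σ * ξ| ^ α)) := by
    rw [hft_eq, hft', norm_stableCF_sub_deriv_div_deriv_zero hα hm.ne', abs_of_pos hσ,
      abs_of_pos hm]
  have hsup := (isGreatest_range_abs_rpow_sub_one_mul_exp_neg hα hσ.ne').csSup_eq
  rw [sSup_range] at hsup
  rw [Tindex, iSup_congr hnorm, ← Real.mul_iSup_of_nonneg (by positivity), hsup]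
  ring

theorem stmt_12 (α σ m : ℝ) (hα : 1 < α) (hα2 : α ≤ 2) (hσ : 0 < σ) (hm : 0 < m)
    (μ : Measure ℝ) [IsProbabilityMeasure μ] (hint : Integrable (fun x : ℝ => x) μ)
    (hft : ∀ ξ : ℝ, ft μ ξ = Complex.exp (-(Complex.I * m * ξ) - ((|σ * ξ| ^ α : ℝ) : ℂ))) :
    Tindex μ = σ * α / (2 * m) * ((α - 1) / α) ^ ((α - 1) / α)
      * Real.exp (-((α - 1) / α)) :=
  stmt_12_general α σ m hα hσ hm μ hint hft
end

section
/- Let F, G be probability measures on ℝ with finite first moments such that F - G has equal (zero) total mass, and let f̂, ĝ be their Fourier transforms. Then the Fourier transform of the integrable function x ↦ F((-∞,x]) - G((-∞,x]) equals (f̂(ξ) - ĝ(ξ))/(iξ) for ξ ≠ 0. -/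
open MeasureTheory Complex

/-! Write `F - G = (F - H) - (G - H)` with `H = 1_{[0,∞)}` the distribution function of `δ₀`.
Then `F(x) - H(x) = ∫ (1_{t ≤ x} - 1_{0 ≤ x}) dF(t)`, and for fixed `t` the kernel
`x ↦ 1_{t ≤ x} - 1_{0 ≤ x}` integrates a locally integrable `g` to `∫_t^0 g` and has `L¹` norm `|t|`.
The finite first moment therefore justifies Fubini, giving `∫ (F - H) g = ∫ (∫_t^0 g) dF(t)`
for bounded continuous `g`; for `g(x) = e^{-iξx}` the inner integral is `(e^{-iξt} - 1)/(iξ)`. -/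

open Set

noncomputable def stepDiff (t x : ℝ) : ℂ :=
  (if t ≤ x then 1 else 0) - (if 0 ≤ x then 1 else 0)

lemma stepDiff_eq_indicator_sub_indicator (t x : ℝ) :
    stepDiff t x = (Ico t 0).indicator 1 x - (Ico 0 t).indicator 1 x := by
  simp only [stepDiff, indicator, mem_Ico, Pi.one_apply]
  split_ifs <;> grind

lemma measurable_stepDiff : Measurable (Function.uncurry stepDiff) := by
  unfold stepDiff Function.uncurry
  exact (Measurable.ite (measurableSet_le measurable_fst measurable_snd) measurable_const
    measurable_const).sub (Measurable.ite (measurableSet_le measurable_const measurable_snd)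
      measurable_const measurable_const)

lemma integrable_stepDiff (t : ℝ) : Integrable (stepDiff t) := by
  have hind (a b : ℝ) : Integrable ((Ico a b).indicator (1 : ℝ → ℂ)) :=
    (integrable_indicator_iff measurableSet_Ico).2 (integrableOn_const measure_Ico_lt_top.ne)
  rw [show stepDiff t = _ from funext (stepDiff_eq_indicator_sub_indicator t)]
  exact (hind t 0).sub (hind 0 t)

lemma integral_stepDiff_mul {g : ℝ → ℂ} (hg : LocallyIntegrable g) (t : ℝ) :
    ∫ x, stepDiff t x * g x = ∫ x in t..0, g x := by
  have hloc (a b : ℝ) : IntegrableOn g (Ico a b) :=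
    (hg.integrableOn_isCompact isCompact_Icc).mono_set Ico_subset_Icc_self
  simp_rw [stepDiff_eq_indicator_sub_indicator, sub_mul, ← indicator_mul_left _ (1 : ℝ → ℂ) g,
    Pi.one_apply, one_mul]
  rw [integral_sub ((integrable_indicator_iff measurableSet_Ico).2 (hloc t 0))
    ((integrable_indicator_iff measurableSet_Ico).2 (hloc 0 t)),
    integral_indicator measurableSet_Ico, integral_indicator measurableSet_Ico,
    integral_Ico_eq_integral_Ioo, integral_Ico_eq_integral_Ioo,
    ← integral_Ioc_eq_integral_Ioo, ← integral_Ioc_eq_integral_Ioo]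
  rfl

lemma integral_norm_stepDiff_le (t : ℝ) : ∫ x, ‖stepDiff t x‖ ≤ |t| := by
  have hind (a b : ℝ) : Integrable ((Ico a b).indicator (1 : ℝ → ℝ)) :=
    (integrable_indicator_iff measurableSet_Ico).2 (integrableOn_const measure_Ico_lt_top.ne)
  calc ∫ x, ‖stepDiff t x‖
      ≤ ∫ x, ((Ico t 0).indicator 1 x + (Ico 0 t).indicator 1 x) := by
        refine integral_mono_of_nonneg (ae_of_all _ fun _ => norm_nonneg _)
          ((hind t 0).add (hind 0 t)) (ae_of_all _ fun x => ?_)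
        simp only [stepDiff_eq_indicator_sub_indicator]
        refine (norm_sub_le _ _).trans (add_le_add ?_ ?_) <;>
          simp only [indicator, Pi.one_apply] <;> split_ifs <;> simp
    _ = |t| := by
        rw [integral_add (hind t 0) (hind 0 t), integral_indicator_one measurableSet_Ico,
          integral_indicator_one measurableSet_Ico, Real.volume_real_Ico, Real.volume_real_Ico]
        rcases le_total t 0 with ht | ht <;> simp [ht, abs_of_nonpos, abs_of_nonneg]

lemma integrable_stepDiff_mul_prod (μ : Measure ℝ) [SFinite μ]
    (hμ : Integrable (fun x : ℝ => x) μ) {g : ℝ → ℂ} (hg : Continuous g) {C : ℝ}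
    (hgC : ∀ x, ‖g x‖ ≤ C) :
    Integrable (fun p : ℝ × ℝ => stepDiff p.1 p.2 * g p.2) (μ.prod volume) := by
  have hC : 0 ≤ C := (norm_nonneg _).trans (hgC 0)
  have hmeas : AEStronglyMeasurable (fun p : ℝ × ℝ => stepDiff p.1 p.2 * g p.2) (μ.prod volume) :=
    (measurable_stepDiff.mul (hg.measurable.comp measurable_snd)).aestronglyMeasurable
  have hint (t : ℝ) : Integrable (fun x => stepDiff t x * g x) :=
    (integrable_stepDiff t).mul_bdd hg.aestronglyMeasurable (ae_of_all _ hgC)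
  rw [integrable_prod_iff hmeas]
  refine ⟨ae_of_all _ hint, (hμ.abs.mul_const C).mono' hmeas.norm.integral_prod_right'
    (ae_of_all _ fun t => ?_)⟩
  rw [Real.norm_of_nonneg (integral_nonneg fun _ => norm_nonneg _)]
  calc ∫ x, ‖stepDiff t x * g x‖
      ≤ ∫ x, ‖stepDiff t x‖ * C :=
        integral_mono (hint t).norm ((integrable_stepDiff t).norm.mul_const C) fun x => by
          rw [norm_mul]; exact mul_le_mul_of_nonneg_left (hgC x) (norm_nonneg _)
    _ ≤ |t| * C := by
        rw [integral_mul_const]; exact mul_le_mul_of_nonneg_right (integral_norm_stepDiff_le t) hC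

noncomputable def cdfSubHeaviside (μ : Measure ℝ) (x : ℝ) : ℂ :=
  (μ (Iic x)).toReal - if 0 ≤ x then 1 else 0

lemma integral_stepDiff_eq_cdfSubHeaviside (μ : Measure ℝ) [IsProbabilityMeasure μ] (x : ℝ) :
    ∫ t, stepDiff t x ∂μ = cdfSubHeaviside μ x := by
  have hcdf : (fun t => if t ≤ x then (1 : ℂ) else 0) = (Iic x).indicator fun _ => 1 := by
    ext t; simp [indicator_apply]
  simp only [stepDiff]
  rw [integral_sub _ (integrable_const _), hcdf, integral_indicator_const _ measurableSet_Iic]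
  · simp [cdfSubHeaviside, measureReal_def]
  · rw [hcdf]; exact (integrable_const 1).indicator measurableSet_Iic

lemma integrable_cdfSubHeaviside_mul (μ : Measure ℝ) [IsProbabilityMeasure μ]
    (hμ : Integrable (fun x : ℝ => x) μ) {g : ℝ → ℂ} (hg : Continuous g) {C : ℝ}
    (hgC : ∀ x, ‖g x‖ ≤ C) : Integrable fun x => cdfSubHeaviside μ x * g x := by
  simpa only [← integral_stepDiff_eq_cdfSubHeaviside, integral_mul_const] using
    (integrable_stepDiff_mul_prod μ hμ hg hgC).integral_prod_right

lemma integral_cdfSubHeaviside_mul (μ : Measure ℝ) [IsProbabilityMeasure μ]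
    (hμ : Integrable (fun x : ℝ => x) μ) {g : ℝ → ℂ} (hg : Continuous g) {C : ℝ}
    (hgC : ∀ x, ‖g x‖ ≤ C) :
    ∫ x, cdfSubHeaviside μ x * g x = ∫ t, (∫ x in t..0, g x) ∂μ := by
  simp_rw [← integral_stepDiff_eq_cdfSubHeaviside, ← integral_mul_const]
  rw [← integral_integral_swap (integrable_stepDiff_mul_prod μ hμ hg hgC)]
  simp_rw [integral_stepDiff_mul hg.locallyIntegrable]

lemma intervalIntegral_exp_neg_I_mul {ξ : ℝ} (hξ : ξ ≠ 0) (t : ℝ) :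
    ∫ x in t..0, exp (-(I * ξ * x)) = (exp (-(I * ξ * t)) - 1) / (I * ξ) := by
  have hc : -(I * ξ) ≠ 0 := by simp [hξ]
  simp_rw [show ∀ x : ℝ, -(I * ξ * x) = -(I * ξ) * x from fun x => by ring]
  rw [integral_exp_mul_complex hc, ofReal_zero, mul_zero, exp_zero]
  field_simp
  ring_nf

lemma norm_exp_neg_I_mul (ξ x : ℝ) : ‖exp (-(I * ξ * x))‖ = 1 := by
  rw [norm_exp]; simp

lemma integral_cdfSubHeaviside_mul_exp (μ : Measure ℝ) [IsProbabilityMeasure μ]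
    (hμ : Integrable (fun x : ℝ => x) μ) {ξ : ℝ} (hξ : ξ ≠ 0) :
    ∫ x, cdfSubHeaviside μ x * exp (-(I * ξ * x)) = (ft μ ξ - 1) / (I * ξ) := by
  have hg : Continuous fun x : ℝ => exp (-(I * ξ * x)) := by fun_prop
  have hgC (x : ℝ) : ‖exp (-(I * ξ * x))‖ ≤ 1 := (norm_exp_neg_I_mul ξ x).le
  rw [integral_cdfSubHeaviside_mul μ hμ hg hgC]
  simp_rw [intervalIntegral_exp_neg_I_mul hξ]
  rw [integral_div, integral_sub ((integrable_const 1).mono' hg.aestronglyMeasurable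
    (ae_of_all _ hgC)) (integrable_const 1), integral_const]
  simp [ft]

theorem stmt_16 (μ ν : Measure ℝ) [IsProbabilityMeasure μ] [IsProbabilityMeasure ν]
    (hμint : Integrable (fun x : ℝ => x) μ) (hνint : Integrable (fun x : ℝ => x) ν)
    (ξ : ℝ) (hξ : ξ ≠ 0) :
    ∫ x : ℝ, (((μ (Set.Iic x)).toReal - (ν (Set.Iic x)).toReal) : ℂ)
        * Complex.exp (-(Complex.I * ξ * x))
      = (ft μ ξ - ft ν ξ) / (Complex.I * ξ) := by
  have hg : Continuous fun x : ℝ => exp (-(I * ξ * x)) := by fun_prop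
  have hgC (x : ℝ) : ‖exp (-(I * ξ * x))‖ ≤ 1 := (norm_exp_neg_I_mul ξ x).le
  have hsplit (x : ℝ) : ((μ (Iic x)).toReal - (ν (Iic x)).toReal : ℂ) * exp (-(I * ξ * x))
      = cdfSubHeaviside μ x * exp (-(I * ξ * x)) - cdfSubHeaviside ν x * exp (-(I * ξ * x)) := by
    simp only [cdfSubHeaviside]; ring
  simp_rw [hsplit]
  rw [integral_sub (integrable_cdfSubHeaviside_mul μ hμint hg hgC)
    (integrable_cdfSubHeaviside_mul ν hνint hg hgC), integral_cdfSubHeaviside_mul_exp μ hμint hξ,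
    integral_cdfSubHeaviside_mul_exp ν hνint hξ]
  ring
end
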